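/- arXiv:1712.05145 — 4 statements merged into one kernel-verified Lean document; each statement's English description precedes it below -/
import Mathlib

section
/- The Green operator Γ̂⁰(ξ) is a projection when restricted composed with C⁰: for any nonzero ξ ∈ ℝ³ and any symmetric τ ∈ ℝ³ˣ³, Γ̂⁰(ξ) : (C⁰ : (Γ̂⁰(ξ) : τ)) = Γ̂⁰(ξ) : τ. -/
open scoped BigOperators

noncomputable section

/-- Kronecker delta on `Fin 3`. -/
def kron (i j : Fin 3) : ℝ := if i = j then 1 else 0

/-- squared Euclidean norm of a frequency vector. -/
def nsq (ξ : Fin 3 → ℝ) : ℝ := ∑ j, ξ j ^ 2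

/-- Fourier coefficients of the Green strain operator `Γ̂⁰(ξ)`. -/
def Gamma0 (lam mu : ℝ) (ξ : Fin 3 → ℝ) (i j k l : Fin 3) : ℝ :=
  (1 / (4 * mu * nsq ξ)) *
      (kron k i * ξ l * ξ j + kron l i * ξ k * ξ j +
        kron k j * ξ l * ξ i + kron l j * ξ k * ξ i) -
    ((lam + mu) / (mu * (lam + 2 * mu))) * (ξ i * ξ j * ξ k * ξ l / (nsq ξ) ^ 2)

/-- Isotropic reference stiffness tensor `C⁰`. -/
def C0 (lam mu : ℝ) (i j k l : Fin 3) : ℝ :=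
  lam * kron i j * kron k l + mu * (kron i k * kron j l + kron i l * kron j k)

/-- Double contraction of a fourth-order tensor with a matrix: `(T : τ)_{ij} = Σ_{k,l} T_{ijkl} τ_{kl}`. -/
def dcontract (T : Fin 3 → Fin 3 → Fin 3 → Fin 3 → ℝ) (τ : Matrix (Fin 3) (Fin 3) ℝ) :
    Matrix (Fin 3) (Fin 3) ℝ :=
  Matrix.of fun i j => ∑ k, ∑ l, T i j k l * τ k l

/-! `Γ̂⁰(ξ) : σ` depends on `σ` only through the traction `w = sym(σ) ξ`: it equals
`(w ⊗ ξ + ξ ⊗ w) / (2μ|ξ|²) - c (ξ·w) ξ ⊗ ξ / |ξ|⁴` with `c = (λ+μ)/(μ(λ+2μ))`.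
This matrix is symmetric, and `C⁰` maps it to a symmetric matrix whose traction is again `w`
(`c` is exactly what cancels the extra normal component `(ξ·w) ξ`), so applying `Γ̂⁰(ξ)` once
more returns the same matrix. -/

open Matrix

section Traction

variable {ι : Type*} [Fintype ι] (lam mu : ℝ) (ξ : ι → ℝ)

def gammaTraction (w : ι → ℝ) : Matrix ι ι ℝ :=
  (1 / (2 * mu * (ξ ⬝ᵥ ξ))) • (vecMulVec w ξ + vecMulVec ξ w) -
    ((lam + mu) / (mu * (lam + 2 * mu)) * (ξ ⬝ᵥ w) / (ξ ⬝ᵥ ξ) ^ 2) • vecMulVec ξ ξ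

variable {lam mu ξ}

theorem gammaTraction_isSymm (w : ι → ℝ) : (gammaTraction lam mu ξ w).IsSymm := by
  simp only [IsSymm, gammaTraction, transpose_sub, transpose_smul, transpose_add,
    transpose_vecMulVec, add_comm]

theorem trace_gammaTraction (w : ι → ℝ) (hξ : ξ ⬝ᵥ ξ ≠ 0) :
    (gammaTraction lam mu ξ w).trace =
      (1 / mu - (lam + mu) / (mu * (lam + 2 * mu))) * (ξ ⬝ᵥ w) / (ξ ⬝ᵥ ξ) := by
  simp only [gammaTraction, trace_sub, trace_smul, trace_add, trace_vecMulVec, smul_eq_mul,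
    dotProduct_comm w ξ]
  field_simp
  ring

theorem gammaTraction_mulVec (w : ι → ℝ) (hmu : mu ≠ 0) (hξ : ξ ⬝ᵥ ξ ≠ 0) :
    gammaTraction lam mu ξ w *ᵥ ξ =
      (1 / (2 * mu)) • w +
        ((1 / (2 * mu) - (lam + mu) / (mu * (lam + 2 * mu))) * (ξ ⬝ᵥ w) / (ξ ⬝ᵥ ξ)) • ξ := by
  ext i
  simp only [gammaTraction, sub_mulVec, smul_mulVec, add_mulVec, vecMulVec_mulVec,
    op_smul_eq_smul, Pi.add_apply, Pi.sub_apply, Pi.smul_apply, smul_eq_mul,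
    dotProduct_comm w ξ]
  field_simp
  ring

variable [DecidableEq ι]

theorem isotropic_gammaTraction_mulVec (w : ι → ℝ) (hmu : mu ≠ 0) (hlm : lam + 2 * mu ≠ 0)
    (hξ : ξ ⬝ᵥ ξ ≠ 0) :
    (lam • (gammaTraction lam mu ξ w).trace • (1 : Matrix ι ι ℝ) +
        (2 * mu) • gammaTraction lam mu ξ w) *ᵥ ξ = w := by
  rw [add_mulVec, smul_mulVec, smul_mulVec, smul_mulVec, one_mulVec,
    gammaTraction_mulVec w hmu hξ, trace_gammaTraction w hξ]
  ext i
  simp only [Pi.add_apply, Pi.smul_apply, smul_eq_mul]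
  have hlm' : lam + mu * 2 ≠ 0 := by rwa [mul_comm]
  field_simp
  ring

end Traction

theorem dcontract_Gamma0 (lam mu : ℝ) (ξ : Fin 3 → ℝ) (σ : Matrix (Fin 3) (Fin 3) ℝ) :
    dcontract (Gamma0 lam mu ξ) σ = gammaTraction lam mu ξ (((2⁻¹ : ℝ) • (σ + σᵀ)) *ᵥ ξ) := by
  ext i j
  fin_cases i <;> fin_cases j <;>
  · simp only [dcontract, Gamma0, gammaTraction, kron, nsq, dotProduct, mulVec, vecMulVec,
      Fin.sum_univ_three, of_apply, Matrix.sub_apply, Matrix.smul_apply, Matrix.add_apply,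
      transpose_apply, smul_eq_mul, Fin.reduceFinMk, Fin.reduceEq, ↓reduceIte, div_eq_mul_inv,
      _root_.mul_inv_rev]
    ring

theorem dcontract_Gamma0_of_isSymm (lam mu : ℝ) (ξ : Fin 3 → ℝ) {σ : Matrix (Fin 3) (Fin 3) ℝ}
    (hσ : σ.IsSymm) : dcontract (Gamma0 lam mu ξ) σ = gammaTraction lam mu ξ (σ *ᵥ ξ) := by
  rw [dcontract_Gamma0, hσ.eq, ← two_smul ℝ σ, smul_smul, inv_mul_cancel₀ two_ne_zero, one_smul]

theorem gamma0_projection_general (lam mu : ℝ) (hmu : mu ≠ 0) (hlm : lam + 2 * mu ≠ 0)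
    (ξ : Fin 3 → ℝ) (hξ : ξ ≠ 0)
    (τ : Matrix (Fin 3) (Fin 3) ℝ)
    (Cop : Matrix (Fin 3) (Fin 3) ℝ → Matrix (Fin 3) (Fin 3) ℝ)
    (hCop : ∀ e : Matrix (Fin 3) (Fin 3) ℝ,
      Cop e = lam • e.trace • (1 : Matrix (Fin 3) (Fin 3) ℝ) + (2 * mu) • e) :
    dcontract (Gamma0 lam mu ξ) (Cop (dcontract (Gamma0 lam mu ξ) τ)) =
      dcontract (Gamma0 lam mu ξ) τ := by
  have hξξ : ξ ⬝ᵥ ξ ≠ 0 := dotProduct_self_eq_zero.not.mpr hξ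
  have hCop_symm : ∀ w, (Cop (gammaTraction lam mu ξ w)).IsSymm := fun w => by
    rw [hCop]
    exact ((isSymm_one.smul _).smul _).add ((gammaTraction_isSymm w).smul _)
  rw [dcontract_Gamma0 lam mu ξ τ, dcontract_Gamma0_of_isSymm lam mu ξ (hCop_symm _), hCop,
    isotropic_gammaTraction_mulVec _ hmu hlm hξξ]

/-- Projection property: `Γ̂⁰(ξ) : (C⁰ : (Γ̂⁰(ξ) : τ)) = Γ̂⁰(ξ) : τ`, where
`C⁰ : ε = λ (tr ε) Id + 2μ ε` is the isotropic reference tensor. -/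
theorem gamma0_projection (lam mu : ℝ) (hmu : mu ≠ 0) (hlm : lam + 2 * mu ≠ 0)
    (ξ : Fin 3 → ℝ) (hξ : ξ ≠ 0)
    (τ : Matrix (Fin 3) (Fin 3) ℝ) (hτ : τ.IsSymm)
    (Cop : Matrix (Fin 3) (Fin 3) ℝ → Matrix (Fin 3) (Fin 3) ℝ)
    (hCop : ∀ e : Matrix (Fin 3) (Fin 3) ℝ,
      Cop e = lam • e.trace • (1 : Matrix (Fin 3) (Fin 3) ℝ) + (2 * mu) • e) :
    dcontract (Gamma0 lam mu ξ) (Cop (dcontract (Gamma0 lam mu ξ) τ)) =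
      dcontract (Gamma0 lam mu ξ) τ :=
  gamma0_projection_general lam mu hmu hlm ξ hξ τ Cop hCop
end
end

section
/- For nonzero ξ ∈ ℝ³, the Green operator satisfies Γ̂⁰_{ijkl}(ξ) = (1/4)(N_{ik}ξ_jξ_l + N_{il}ξ_jξ_k + N_{jk}ξ_iξ_l + N_{jl}ξ_iξ_k), where N = A(ξ)⁻¹ is the inverse acoustic tensor A(ξ) = μ⁰‖ξ‖² Id + (λ⁰+μ⁰) ξ⊗ξ. -/
/-! The acoustic tensor `A(ξ) = μ‖ξ‖² I + (λ + μ) ξ ξᵀ` is a rank-one perturbation of a scalar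
matrix, so the Sherman–Morrison formula gives
`N = A(ξ)⁻¹ = (μ‖ξ‖²)⁻¹ I - (λ + μ) / (μ (λ + 2μ) ‖ξ‖⁴) ξ ξᵀ`.
Substituting, the identity part of `N` produces the Kronecker terms of `Γ̂⁰(ξ)`, and each of the
four rank-one contributions supplies a quarter of its `ξᵢξⱼξₖξₗ` term. -/

open scoped BigOperators

noncomputable section

open Matrix

-- Sherman–Morrison for a rank-one perturbation of a scalar matrix.
theorem Matrix.smul_one_add_smul_vecMulVec_mul_eq_one {n K : Type*} [Fintype n] [DecidableEq n]
    [Field K] {a c : K} (v : n → K) (ha : a ≠ 0) (hd : a + c * (v ⬝ᵥ v) ≠ 0) :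
    (a • (1 : Matrix n n K) + c • vecMulVec v v) *
        (a⁻¹ • 1 - (c / (a * (a + c * (v ⬝ᵥ v)))) • vecMulVec v v) = 1 := by
  have hvv : vecMulVec v v * vecMulVec v v = (v ⬝ᵥ v) • vecMulVec v v := by
    rw [vecMulVec_mul_vecMulVec, vecMulVec_smul]
  have hcoef : c * a⁻¹ - (a * (c / (a * (a + c * (v ⬝ᵥ v)))) +
      c * (c / (a * (a + c * (v ⬝ᵥ v)))) * (v ⬝ᵥ v)) = 0 := by
    field_simp
    ring
  simp only [add_mul, mul_sub, smul_mul_smul_comm, mul_one, one_mul, hvv, smul_smul,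
    mul_inv_cancel₀ ha, one_smul]
  rw [add_sub_assoc, ← add_smul, ← sub_smul, hcoef, zero_smul, add_zero]

lemma nsq_eq_dotProduct (ξ : Fin 3 → ℝ) : nsq ξ = ξ ⬝ᵥ ξ := by
  simp only [nsq, dotProduct, sq]

lemma nsq_ne_zero {ξ : Fin 3 → ℝ} (hξ : ξ ≠ 0) : nsq ξ ≠ 0 := by
  rw [nsq_eq_dotProduct]
  exact fun h => hξ (dotProduct_self_eq_zero.mp h)

lemma kron_comm (i j : Fin 3) : kron i j = kron j i := by
  simp only [kron, eq_comm]

def acousticTensor (lam mu : ℝ) (ξ : Fin 3 → ℝ) : Matrix (Fin 3) (Fin 3) ℝ :=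
  Matrix.of fun i k => mu * nsq ξ * kron i k + (lam + mu) * ξ i * ξ k

def acousticTensorInv (lam mu : ℝ) (ξ : Fin 3 → ℝ) : Matrix (Fin 3) (Fin 3) ℝ :=
  (mu * nsq ξ)⁻¹ • 1 - ((lam + mu) / (mu * nsq ξ * ((lam + 2 * mu) * nsq ξ))) • vecMulVec ξ ξ

section Acoustic

variable {lam mu : ℝ} {ξ : Fin 3 → ℝ}

lemma acousticTensor_eq_smul_one_add :
    acousticTensor lam mu ξ = (mu * nsq ξ) • 1 + (lam + mu) • vecMulVec ξ ξ := by
  ext i k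
  simp only [acousticTensor, kron, of_apply, Matrix.add_apply, Matrix.smul_apply, one_apply,
    vecMulVec_apply, smul_eq_mul, mul_assoc]

lemma acousticTensor_mul_acousticTensorInv (hmu : mu ≠ 0) (hlm : lam + 2 * mu ≠ 0)
    (hξ : ξ ≠ 0) : acousticTensor lam mu ξ * acousticTensorInv lam mu ξ = 1 := by
  have hd : mu * nsq ξ + (lam + mu) * (ξ ⬝ᵥ ξ) = (lam + 2 * mu) * nsq ξ := by
    rw [← nsq_eq_dotProduct]
    ring
  have h := smul_one_add_smul_vecMulVec_mul_eq_one ξ (mul_ne_zero hmu (nsq_ne_zero hξ))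
    (hd ▸ mul_ne_zero hlm (nsq_ne_zero hξ))
  rwa [hd, ← acousticTensor_eq_smul_one_add] at h

lemma eq_acousticTensorInv_of_mul_eq_one (hmu : mu ≠ 0) (hlm : lam + 2 * mu ≠ 0) (hξ : ξ ≠ 0)
    {N : Matrix (Fin 3) (Fin 3) ℝ} (hN : N * acousticTensor lam mu ξ = 1) :
    N = acousticTensorInv lam mu ξ :=
  left_inv_eq_right_inv hN (acousticTensor_mul_acousticTensorInv hmu hlm hξ)

end Acoustic

theorem gamma0_via_acoustic_general (lam mu : ℝ) (hmu : mu ≠ 0) (hlm : lam + 2 * mu ≠ 0)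
    (ξ : Fin 3 → ℝ) (hξ : ξ ≠ 0)
    (N : Matrix (Fin 3) (Fin 3) ℝ)
    (hN₂ : N * (Matrix.of fun i k => mu * nsq ξ * kron i k + (lam + mu) * ξ i * ξ k) = 1) :
    ∀ i j k l : Fin 3,
      Gamma0 lam mu ξ i j k l =
        (1 / 4) * (N i k * ξ j * ξ l + N i l * ξ j * ξ k +
          N j k * ξ i * ξ l + N j l * ξ i * ξ k) := by
  intro i j k l
  have hnsq := nsq_ne_zero hξ
  rw [eq_acousticTensorInv_of_mul_eq_one hmu hlm hξ hN₂, Gamma0, kron_comm k i, kron_comm l i, kron_comm k j, kron_comm l j]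
  simp only [acousticTensorInv, kron, Matrix.sub_apply, Matrix.smul_apply, one_apply,
    vecMulVec_apply, smul_eq_mul]
  field_simp
  ring

/-- Representation of `Γ̂⁰(ξ)` through the inverse acoustic tensor `N = A(ξ)⁻¹`. -/
theorem gamma0_via_acoustic (lam mu : ℝ) (hmu : mu ≠ 0) (hlm : lam + 2 * mu ≠ 0)
    (ξ : Fin 3 → ℝ) (hξ : ξ ≠ 0)
    (N : Matrix (Fin 3) (Fin 3) ℝ)
    (hN₁ : (Matrix.of fun i k => mu * nsq ξ * kron i k + (lam + mu) * ξ i * ξ k) * N = 1)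
    (hN₂ : N * (Matrix.of fun i k => mu * nsq ξ * kron i k + (lam + mu) * ξ i * ξ k) = 1) :
    ∀ i j k l : Fin 3,
      Gamma0 lam mu ξ i j k l =
        (1 / 4) * (N i k * ξ j * ξ l + N i l * ξ j * ξ k +
          N j k * ξ i * ξ l + N j l * ξ i * ξ k) :=
  gamma0_via_acoustic_general lam mu hmu hlm ξ hξ N hN₂
end
end

section
/- For any nonzero ξ ∈ ℝ³ and any vector a ∈ ℝ³, letting ε̂ = (i/2)(a⊗ξ + ξ⊗a) be the Fourier strain of the displacement mode û = a (i.e., u(x) = a exp(iξ·x)), the Lippmann–Schwinger consistency holds: Γ̂⁰(ξ) : (C⁰ : ε̂) = ε̂. -/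
/-!
Put `τ = C⁰ : ε`. Since `ε` is symmetric so is `τ`, and `Γ̂⁰(ξ) : τ` only sees `τ ξ` and `ξ · τ ξ`.
For `ε = sym(a ⊗ ξ)` one finds `τ ξ = (λ + μ)(a · ξ) ξ + μ |ξ|² a` and
`ξ · τ ξ = (λ + 2μ)(a · ξ) |ξ|²`. The `ξ ⊗ ξ` contributions of the two terms of `Γ̂⁰` are then both
`(λ + μ)(a · ξ) / (μ |ξ|²) ξ ⊗ ξ` and cancel, leaving `sym(a ⊗ ξ) = ε`.
-/

open scoped BigOperators

noncomputable section

open Matrix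

section SymmetricStrain

variable {n : Type*}

def symmOuter (a b : n → ℝ) : Matrix n n ℝ := (1 / 2 : ℝ) • (vecMulVec a b + vecMulVec b a)

def isotropicStiffness [Fintype n] [DecidableEq n] (lam mu : ℝ) (e : Matrix n n ℝ) :
    Matrix n n ℝ :=
  lam • e.trace • (1 : Matrix n n ℝ) + (2 * mu) • e

lemma symmOuter_apply (a b : n → ℝ) (i j : n) :
    symmOuter a b i j = 1 / 2 * (a i * b j + b i * a j) :=
  rfl

lemma symmOuter_isSymm (a b : n → ℝ) : (symmOuter a b).IsSymm := by
  simp [symmOuter, IsSymm, transpose_vecMulVec, add_comm]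

lemma isotropicStiffness_isSymm [Fintype n] [DecidableEq n] (lam mu : ℝ) {e : Matrix n n ℝ}
    (he : e.IsSymm) : (isotropicStiffness lam mu e).IsSymm :=
  ((isSymm_one.smul _).smul _).add (he.smul _)

lemma trace_symmOuter [Fintype n] (a b : n → ℝ) : (symmOuter a b).trace = a ⬝ᵥ b := by
  simp [symmOuter, trace_vecMulVec, dotProduct_comm b a]
  ring

lemma symmOuter_mulVec [Fintype n] (a b v : n → ℝ) :
    symmOuter a b *ᵥ v = (1 / 2 : ℝ) • ((b ⬝ᵥ v) • a + (a ⬝ᵥ v) • b) := by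
  simp [symmOuter, smul_mulVec, add_mulVec, vecMulVec_mulVec]

lemma isotropicStiffness_mulVec [Fintype n] [DecidableEq n] (lam mu : ℝ) (e : Matrix n n ℝ)
    (v : n → ℝ) :
    isotropicStiffness lam mu e *ᵥ v = (lam * e.trace) • v + (2 * mu) • (e *ᵥ v) := by
  simp [isotropicStiffness, add_mulVec, smul_mulVec, smul_smul]

lemma isotropicStiffness_symmOuter_mulVec [Fintype n] [DecidableEq n] (lam mu : ℝ)
    (a b : n → ℝ) :
    isotropicStiffness lam mu (symmOuter a b) *ᵥ b =
      ((lam + mu) * (a ⬝ᵥ b)) • b + (mu * (b ⬝ᵥ b)) • a := by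
  rw [isotropicStiffness_mulVec, trace_symmOuter, symmOuter_mulVec]
  module

end SymmetricStrain

lemma sum_sum_kron_left_mul (ξ : Fin 3 → ℝ) (τ : Matrix (Fin 3) (Fin 3) ℝ) (i j : Fin 3) :
    ∑ k, ∑ l, kron k i * ξ l * ξ j * τ k l = (τ *ᵥ ξ) i * ξ j := by
  rw [Finset.sum_comm]
  simp only [kron, ite_mul, one_mul, zero_mul, Finset.sum_ite_eq', Finset.mem_univ, if_true]
  rw [mulVec, dotProduct, Finset.sum_mul]
  congr! 1 with l
  ring

lemma sum_sum_kron_right_mul (ξ : Fin 3 → ℝ) (τ : Matrix (Fin 3) (Fin 3) ℝ) (i j : Fin 3) :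
    ∑ k, ∑ l, kron l i * ξ k * ξ j * τ k l = (ξ ᵥ* τ) i * ξ j := by
  simp only [kron, ite_mul, one_mul, zero_mul, Finset.sum_ite_eq', Finset.mem_univ, if_true]
  rw [vecMul, dotProduct, Finset.sum_mul]
  congr! 1 with l
  ring

lemma dcontract_gamma0_apply (lam mu : ℝ) (ξ : Fin 3 → ℝ) (τ : Matrix (Fin 3) (Fin 3) ℝ)
    (i j : Fin 3) :
    dcontract (Gamma0 lam mu ξ) τ i j =
      1 / (4 * mu * nsq ξ) *
          ((τ *ᵥ ξ) i * ξ j + (ξ ᵥ* τ) i * ξ j + (τ *ᵥ ξ) j * ξ i + (ξ ᵥ* τ) j * ξ i) -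
        (lam + mu) / (mu * (lam + 2 * mu)) * (ξ i * ξ j * (ξ ⬝ᵥ (τ *ᵥ ξ)) / nsq ξ ^ 2) := by
  have hquad : ∑ k, ∑ l, ξ i * ξ j * ξ k * ξ l / nsq ξ ^ 2 * τ k l =
      ξ i * ξ j * (ξ ⬝ᵥ (τ *ᵥ ξ)) / nsq ξ ^ 2 := by
    simp only [mulVec, dotProduct, Finset.mul_sum, Finset.sum_div]
    congr! 2 with k _ l
    ring
  calc dcontract (Gamma0 lam mu ξ) τ i j
      = ∑ k, ∑ l, (1 / (4 * mu * nsq ξ) *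
          (kron k i * ξ l * ξ j * τ k l + kron l i * ξ k * ξ j * τ k l +
            kron k j * ξ l * ξ i * τ k l + kron l j * ξ k * ξ i * τ k l) -
          (lam + mu) / (mu * (lam + 2 * mu)) * (ξ i * ξ j * ξ k * ξ l / nsq ξ ^ 2 * τ k l)) := by
        simp only [dcontract, of_apply, Gamma0]
        congr! 2 with k _ l
        ring
    _ = _ := by
        simp only [Finset.sum_sub_distrib, Finset.sum_add_distrib, ← Finset.mul_sum,
          sum_sum_kron_left_mul, sum_sum_kron_right_mul, hquad]

lemma dcontract_gamma0_apply_of_isSymm (lam mu : ℝ) (ξ : Fin 3 → ℝ)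
    {τ : Matrix (Fin 3) (Fin 3) ℝ} (hτ : τ.IsSymm) (i j : Fin 3) :
    dcontract (Gamma0 lam mu ξ) τ i j =
      1 / (2 * mu * nsq ξ) * ((τ *ᵥ ξ) i * ξ j + (τ *ᵥ ξ) j * ξ i) -
        (lam + mu) / (mu * (lam + 2 * mu)) * (ξ i * ξ j * (ξ ⬝ᵥ (τ *ᵥ ξ)) / nsq ξ ^ 2) := by
  rw [dcontract_gamma0_apply, ← mulVec_transpose, hτ.eq]
  ring

/-- Lippmann–Schwinger consistency: for the (real form of the) Fourier strain
`ε̂ = (1/2)(a⊗ξ + ξ⊗a)` of a displacement mode, `Γ̂⁰(ξ) : (C⁰ : ε̂) = ε̂`. -/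
theorem gamma0_consistency (lam mu : ℝ) (hmu : mu ≠ 0) (hlm : lam + 2 * mu ≠ 0)
    (ξ : Fin 3 → ℝ) (hξ : ξ ≠ 0) (a : Fin 3 → ℝ) :
    (let ε : Matrix (Fin 3) (Fin 3) ℝ :=
        Matrix.of fun i j => (1 / 2) * (a i * ξ j + ξ i * a j)
      let Cop : Matrix (Fin 3) (Fin 3) ℝ → Matrix (Fin 3) (Fin 3) ℝ :=
        fun e => lam • e.trace • (1 : Matrix (Fin 3) (Fin 3) ℝ) + (2 * mu) • e
      dcontract (Gamma0 lam mu ξ) (Cop ε) = ε) := by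
  show dcontract (Gamma0 lam mu ξ) (isotropicStiffness lam mu (symmOuter a ξ)) = symmOuter a ξ
  have hτ := isotropicStiffness_isSymm lam mu (symmOuter_isSymm a ξ)
  have hn := nsq_ne_zero hξ
  ext i j
  rw [dcontract_gamma0_apply_of_isSymm lam mu ξ hτ, isotropicStiffness_symmOuter_mulVec]
  simp only [symmOuter_apply, dotProduct_add, dotProduct_smul, smul_eq_mul, ← nsq_eq_dotProduct,
    Pi.add_apply, Pi.smul_apply, dotProduct_comm ξ a]
  field_simp
  ring
end
end

section
/- Trace identity: for any nonzero ξ ∈ ℝ³ and symmetric τ ∈ ℝ³ˣ³, tr(Γ̂⁰(ξ) : τ) = (ξᵀ τ ξ)/((λ⁰+2μ⁰)‖ξ‖²). -/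
open scoped BigOperators

noncomputable section

/-! Taking the trace contracts `Γ̂⁰_{iikl}` over `i`. The four Kronecker terms then sum to
`4 ξ_k ξ_l`, and the quartic term to `‖ξ‖² ξ_k ξ_l`, so `Σ_i Γ̂⁰_{iikl} = c ξ_k ξ_l / ‖ξ‖²` with
`c = 1/μ⁰ - (λ⁰+μ⁰)/(μ⁰(λ⁰+2μ⁰)) = 1/(λ⁰+2μ⁰)`; contracting with `τ` gives `ξᵀτξ`. -/

lemma trace_dcontract (T : Fin 3 → Fin 3 → Fin 3 → Fin 3 → ℝ) (τ : Matrix (Fin 3) (Fin 3) ℝ) :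
    (dcontract T τ).trace = ∑ k, ∑ l, (∑ i, T i i k l) * τ k l := by
  simp only [Matrix.trace, Matrix.diag, dcontract, Matrix.of_apply, Finset.sum_mul]
  rw [Finset.sum_comm]
  exact Finset.sum_congr rfl fun k _ => Finset.sum_comm

lemma sum_kron_mul (k : Fin 3) (f : Fin 3 → ℝ) : ∑ i, kron k i * f i = f k := by
  simp [kron]

lemma sum_Gamma0_diag (lam mu : ℝ) (hmu : mu ≠ 0) (hlm : lam + 2 * mu ≠ 0)
    (ξ : Fin 3 → ℝ) (k l : Fin 3) :
    ∑ i, Gamma0 lam mu ξ i i k l = ξ k * ξ l / ((lam + 2 * mu) * nsq ξ) := by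
  have hδ : ∑ i, (kron k i * ξ l * ξ i + kron l i * ξ k * ξ i +
      kron k i * ξ l * ξ i + kron l i * ξ k * ξ i) = 4 * (ξ k * ξ l) := by
    simp only [Finset.sum_add_distrib, mul_assoc, sum_kron_mul]
    ring
  have hξξ : ∑ i, ξ i * ξ i * ξ k * ξ l / nsq ξ ^ 2 = ξ k * ξ l / nsq ξ := by
    have hnsq : ∑ i, ξ i * ξ i = nsq ξ := by simp only [nsq, sq]
    rw [← Finset.sum_div, ← Finset.sum_mul, ← Finset.sum_mul, hnsq, mul_assoc, mul_comm, sq,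
      mul_div_assoc, div_self_mul_self', div_eq_mul_inv]
  have hcoef : 1 / mu - (lam + mu) / (mu * (lam + 2 * mu)) = 1 / (lam + 2 * mu) := by
    rw [div_sub_div _ _ hmu (mul_ne_zero hmu hlm), div_eq_div_iff (by positivity) hlm]
    ring
  simp only [Gamma0, Finset.sum_sub_distrib, ← Finset.mul_sum, hδ, hξξ]
  calc _ = (1 / mu - (lam + mu) / (mu * (lam + 2 * mu))) * (ξ k * ξ l / nsq ξ) := by ring
    _ = _ := by rw [hcoef, div_mul_div_comm, one_mul]

theorem gamma0_trace_general (lam mu : ℝ) (hmu : mu ≠ 0) (hlm : lam + 2 * mu ≠ 0)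
    (ξ : Fin 3 → ℝ)
    (τ : Matrix (Fin 3) (Fin 3) ℝ) :
    (dcontract (Gamma0 lam mu ξ) τ).trace =
      (∑ i, ∑ j, ξ i * τ i j * ξ j) / ((lam + 2 * mu) * nsq ξ) := by
  simp only [trace_dcontract, sum_Gamma0_diag lam mu hmu hlm ξ, Finset.sum_div]
  congr! 2 with k _ l _
  ring

/-- Trace identity: `tr(Γ̂⁰(ξ) : τ) = (ξᵀ τ ξ)/((λ⁰+2μ⁰)‖ξ‖²)`. -/
theorem gamma0_trace (lam mu : ℝ) (hmu : mu ≠ 0) (hlm : lam + 2 * mu ≠ 0)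
    (ξ : Fin 3 → ℝ) (hξ : ξ ≠ 0)
    (τ : Matrix (Fin 3) (Fin 3) ℝ) (hτ : τ.IsSymm) :
    (dcontract (Gamma0 lam mu ξ) τ).trace =
      (∑ i, ∑ j, ξ i * τ i j * ξ j) / ((lam + 2 * mu) * nsq ξ) :=
  gamma0_trace_general lam mu hmu hlm ξ τ
end
end
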